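/- Let (R_i, t_i) be a perfectoid tower arising from (R_0, I_0) with I_1 as in axiom (f). Then: (1) for any sequence of principal ideals I_i ⊆ R_i (i ≥ 2), the condition that the preimage ideal F_i^{-1}(I_i·(R_i/I_0R_i)) equals I_{i+1}·(R_{i+1}/I_0R_{i+1}) for all i ≥ 0 is equivalent to the condition that F_i(I_{i+1}·(R_{i+1}/I_0R_{i+1})) = I_i·(R_i/I_0R_i) for all i ≥ 0; (2) either condition implies I_{i+1}^p = I_iR_{i+1} for all i ≥ 0; (3) there exists a unique sequence of principal ideals (I_i)_{i≥0}, extending the given I_0 and I_1, satisfying these equivalent conditions, and moreover there exist elements f̄_i ∈ R_i/I_0R_i with I_i·(R_i/I_0R_i) = (f̄_i) and F_i(f̄_{i+1}) = f̄_i for all i ≥ 0. -/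

import Mathlib

set_option synthInstance.maxHeartbeats 1000000
set_option maxHeartbeats 1000000
universe u

namespace PaperTower

variable {R : ℕ → Type u} [∀ i, CommRing (R i)]

/-- The set of `J`-torsion elements of a commutative ring. -/
def torSet {A : Type*} [CommRing A] (J : Ideal A) : Set A :=
  {x | ∀ a ∈ J, ∃ n : ℕ, 0 < n ∧ a ^ n * x = 0}

/-- Cast ring homomorphism between quotients at equal indices. -/
def qcast (I : ∀ i, Ideal (R i)) {m n : ℕ} (h : m = n) :
    (R m ⧸ I m) →+* (R n ⧸ I n) := by subst h; exact RingHom.id _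

/-- The `j`-th small tilt (inverse quasi-perfection) of a tower, as a subring of the
product of the quotients, consisting of sequences compatible with the Frobenius
projections `F`. -/
def Tilt (I : ∀ i, Ideal (R i))
    (F : ∀ i, (R (i + 1) ⧸ I (i + 1)) →+* (R i ⧸ I i)) (j : ℕ) :
    Subring (∀ i, R (j + i) ⧸ I (j + i)) where
  carrier := {a | ∀ i, F (j + i) (a (i + 1)) = a i}
  zero_mem' := by
    intro i
    show F (j + i) 0 = 0
    simp
  one_mem' := by
    intro i
    show F (j + i) 1 = 1
    simp
  add_mem' := by
    intro a b ha hb i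
    show F (j + i) (a (i + 1) + b (i + 1)) = a i + b i
    rw [map_add, ha i, hb i]
  mul_mem' := by
    intro a b ha hb i
    show F (j + i) (a (i + 1) * b (i + 1)) = a i * b i
    rw [map_mul, ha i, hb i]
  neg_mem' := by
    intro a ha i
    show F (j + i) (-(a (i + 1))) = -(a i)
    rw [map_neg, ha i]

/-- The `m`-th projection `Φ^{(j)}_m` from the `j`-th small tilt. -/
def proj (I : ∀ i, Ideal (R i))
    (F : ∀ i, (R (i + 1) ⧸ I (i + 1)) →+* (R i ⧸ I i)) (j m : ℕ) :
    Tilt I F j →+* (R (j + m) ⧸ I (j + m)) :=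
  (Pi.evalRingHom _ m).comp (Tilt I F j).subtype

/-- For a perfectoid tower: (1) for any sequence of principal ideals
extending `I₀, I₁`, the preimage condition `F_i^{-1}(I_i·(R_i/I₀R_i)) = I_{i+1}·(R_{i+1}/I₀R_{i+1})`
for all `i` is equivalent to the image condition `F_i(I_{i+1}·(R_{i+1}/I₀R_{i+1})) = I_i·(R_i/I₀R_i)`
for all `i`; (2) either condition implies `I_{i+1}^p = I_iR_{i+1}` for all `i`;
(3) there is a unique sequence of principal ideals extending `I₀, I₁` satisfying these
conditions, with compatible generators `f̄_i` in `R_i/I₀R_i` satisfying `F_i f̄_{i+1} = f̄_i`. -/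

lemma jac_of_pow_mem {A : Type*} [CommRing A] {x : A} {n : ℕ}
    (h : x ^ n ∈ (⊥ : Ideal A).jacobson) : x ∈ (⊥ : Ideal A).jacobson := by
  rw [Ideal.jacobson, Ideal.mem_sInf] at h ⊢
  intro J hJ
  exact hJ.2.isPrime.mem_of_pow_mem n (h hJ)

lemma unit_of_jac {A : Type*} [CommRing A] {x : A} (h : x ∈ (⊥ : Ideal A).jacobson) :
    IsUnit (1 - x) := by
  have := Ideal.mem_jacobson_bot.mp h (-1)
  simpa [sub_eq_add_neg, add_comm] using this

lemma key (p : ℕ) (hp : p.Prime)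
    (R : ℕ → Type u) [∀ i, CommRing (R i)]
    (t : ∀ i, R i →+* R (i + 1))
    (I : ∀ i, Ideal (R i))
    (hIsucc : ∀ i, I (i + 1) = (I i).map (t i))
    (tbar : ∀ i, (R i ⧸ I i) →+* (R (i + 1) ⧸ I (i + 1)))
    (htbar : ∀ i (x : R i),
      tbar i (Ideal.Quotient.mk (I i) x) = Ideal.Quotient.mk (I (i + 1)) (t i x))
    (F : ∀ i, (R (i + 1) ⧸ I (i + 1)) →+* (R i ⧸ I i))
    (hF : ∀ i (x : R (i + 1) ⧸ I (i + 1)), tbar i (F i x) = x ^ p)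
    (hFsurj : ∀ i, Function.Surjective (F i))
    (hJac : ∀ i, I i ≤ (⊥ : Ideal (R i)).jacobson)
    (Ipill : ∀ i, Ideal (R i))
    (h0 : Ipill 0 = I 0) (h1p : Ipill 1 ^ p = I 1)
    (hprin : ∀ i, (Ipill i).IsPrincipal)
    (hcomap : ∀ i, Ideal.comap (F i) ((Ipill i).map (Ideal.Quotient.mk (I i)))
        = (Ipill (i + 1)).map (Ideal.Quotient.mk (I (i + 1)))) :
    ∀ n, Ipill (n + 1) ^ p = (Ipill n).map (t n) ∧ I (n + 1) ≤ Ipill (n + 1) ^ p ∧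
      Ipill (n + 1) ^ (p ^ (n + 1)) = I (n + 1) := by
  intro n
  induction n with
  | zero => exact ⟨by rw [h1p, hIsucc 0, h0], h1p.ge, by rw [pow_one, h1p]⟩
  | succ n ih =>
    obtain ⟨hpow, hle, hppow⟩ := ih
    obtain ⟨a, ha⟩ := (hprin (n + 1)).1
    obtain ⟨b, hb⟩ := (hprin (n + 2)).1
    rw [Ideal.submodule_span_eq] at ha hb
    have hIle_a : I (n + 1) ≤ Ideal.span {a ^ p} := by
      rw [← Ideal.span_singleton_pow, ← ha]; exact hle
    have hI2le : I (n + 2) ≤ Ideal.span {t (n + 1) a ^ p} := by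
      rw [hIsucc (n + 1)]
      calc (I (n + 1)).map (t (n + 1)) ≤ (Ideal.span {a ^ p}).map (t (n + 1)) :=
            Ideal.map_mono hIle_a
        _ = Ideal.span {t (n + 1) a ^ p} := by
            rw [Ideal.map_span, Set.image_singleton, map_pow]
    have hjta : t (n + 1) a ∈ (⊥ : Ideal (R (n + 2))).jacobson := by
      apply jac_of_pow_mem (n := p ^ (n + 1))
      apply hJac (n + 2)
      rw [← map_pow, hIsucc (n + 1)]
      exact Ideal.mem_map_of_mem _
        (hppow ▸ Ideal.pow_mem_pow (ha ▸ Ideal.mem_span_singleton_self a) _)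
    have hsub : Ipill (n + 2) ^ p ≤ (Ipill (n + 1)).map (t (n + 1)) := by
      have hmem : Ideal.Quotient.mk (I (n + 2)) b ∈
          Ideal.comap (F (n + 1)) ((Ipill (n + 1)).map (Ideal.Quotient.mk (I (n + 1)))) := by
        rw [hcomap (n + 1)]
        exact Ideal.mem_map_of_mem _ (hb ▸ Ideal.mem_span_singleton_self b)
      have h2 : (Ideal.Quotient.mk (I (n + 2)) b) ^ p ∈
          ((Ipill (n + 1)).map (Ideal.Quotient.mk (I (n + 1)))).map (tbar (n + 1)) := by
        rw [← hF]
        exact Ideal.mem_map_of_mem _ hmem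
      have h3 : ((Ipill (n + 1)).map (Ideal.Quotient.mk (I (n + 1)))).map (tbar (n + 1))
          = ((Ipill (n + 1)).map (t (n + 1))).map (Ideal.Quotient.mk (I (n + 2))) := by
        rw [Ideal.map_map, Ideal.map_map]
        congr 1
        exact RingHom.ext fun x => htbar (n + 1) x
      rw [h3] at h2
      have hIin : I (n + 2) ≤ (Ipill (n + 1)).map (t (n + 1)) := by
        rw [hIsucc (n + 1)]
        exact Ideal.map_mono (le_trans hle (Ideal.pow_le_self hp.ne_zero))
      have h5 : b ^ p ∈ Ideal.comap (Ideal.Quotient.mk (I (n + 2)))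
          (((Ipill (n + 1)).map (t (n + 1))).map (Ideal.Quotient.mk (I (n + 2)))) := by
        rw [Ideal.mem_comap, map_pow]; exact h2
      rw [Ideal.comap_map_of_surjective _ Ideal.Quotient.mk_surjective] at h5
      rw [← RingHom.ker_eq_comap_bot, Ideal.mk_ker, sup_eq_left.mpr hIin] at h5
      rw [hb, Ideal.span_singleton_pow]
      exact (Ideal.span_singleton_le_iff_mem _).mpr h5
    have hsup : (Ipill (n + 1)).map (t (n + 1)) ≤ Ipill (n + 2) ^ p := by
      obtain ⟨x, hx⟩ := hFsurj (n + 1) (Ideal.Quotient.mk (I (n + 1)) a)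
      have hxmem : x ∈ Ideal.span {Ideal.Quotient.mk (I (n + 2)) b} := by
        have hxc : x ∈ Ideal.comap (F (n + 1))
            ((Ipill (n + 1)).map (Ideal.Quotient.mk (I (n + 1)))) := by
          rw [Ideal.mem_comap, hx]
          exact Ideal.mem_map_of_mem _ (ha ▸ Ideal.mem_span_singleton_self a)
        rw [hcomap (n + 1), hb, Ideal.map_span, Set.image_singleton] at hxc
        exact hxc
      obtain ⟨c, hc⟩ := Ideal.mem_span_singleton'.mp hxmem
      obtain ⟨s, hs⟩ := Ideal.Quotient.mk_surjective c
      have heq : Ideal.Quotient.mk (I (n + 2)) (t (n + 1) a)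
          = Ideal.Quotient.mk (I (n + 2)) (s ^ p * b ^ p) := by
        rw [← htbar (n + 1) a, ← hx, hF (n + 1), ← hc, ← hs]
        rw [map_mul, map_pow, map_pow, mul_pow]
      have hd : t (n + 1) a - s ^ p * b ^ p ∈ I (n + 2) := Ideal.Quotient.eq.mp heq
      obtain ⟨h, hh⟩ := Ideal.mem_span_singleton'.mp (hI2le hd)
      have hA : t (n + 1) a ^ (p - 1) * t (n + 1) a = t (n + 1) a ^ p := by
        rw [← pow_succ, Nat.sub_add_cancel hp.one_le]
      have hrearr : t (n + 1) a * (1 - t (n + 1) a ^ (p - 1) * h) = s ^ p * b ^ p := by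
        linear_combination -hh - h * hA
      have hunit : IsUnit (1 - t (n + 1) a ^ (p - 1) * h) := by
        apply unit_of_jac
        exact Ideal.mul_mem_right _ _
          (Ideal.pow_mem_of_mem _ hjta _ (Nat.sub_pos_of_lt hp.one_lt))
      obtain ⟨v, hv⟩ := isUnit_iff_exists_inv.mp hunit
      have hta : t (n + 1) a ∈ Ideal.span {b ^ p} := by
        rw [Ideal.mem_span_singleton']
        refine ⟨v * s ^ p, ?_⟩
        linear_combination (-v) * hrearr + t (n + 1) a * hv
      rw [ha, hb, Ideal.map_span, Set.image_singleton, Ideal.span_singleton_pow]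
      exact (Ideal.span_singleton_le_iff_mem _).mpr hta
    have h1 : Ipill (n + 2) ^ p = (Ipill (n + 1)).map (t (n + 1)) := le_antisymm hsub hsup
    refine ⟨h1, ?_, ?_⟩
    · rw [hIsucc (n + 1)]
      exact le_trans (Ideal.map_mono (le_trans hle (Ideal.pow_le_self hp.ne_zero))) hsup
    · have hexp : p ^ (n + 2) = p * p ^ (n + 1) := by ring
      rw [hexp, pow_mul, h1, ← Ideal.map_pow, hppow, ← hIsucc]

lemma map_to_comap (p : ℕ) (hp : p.Prime)
    (R : ℕ → Type u) [∀ i, CommRing (R i)]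
    (t : ∀ i, R i →+* R (i + 1))
    (I : ∀ i, Ideal (R i))
    (tbar : ∀ i, (R i ⧸ I i) →+* (R (i + 1) ⧸ I (i + 1)))
    (htbar : ∀ i (x : R i),
      tbar i (Ideal.Quotient.mk (I i) x) = Ideal.Quotient.mk (I (i + 1)) (t i x))
    (F : ∀ i, (R (i + 1) ⧸ I (i + 1)) →+* (R i ⧸ I i))
    (hF : ∀ i (x : R (i + 1) ⧸ I (i + 1)), tbar i (F i x) = x ^ p)
    (hFsurj : ∀ i, Function.Surjective (F i))
    (I1e : ∀ i, Ideal (R (i + 1)))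
    (hI1es : ∀ i, I1e (i + 1) = (I1e i).map (t (i + 1)))
    (hkerF : ∀ i, RingHom.ker (F i) = (I1e i).map (Ideal.Quotient.mk (I (i + 1))))
    (Ipill : ∀ i, Ideal (R i))
    (h1 : Ipill 1 = I1e 0)
    (hprin : ∀ i, (Ipill i).IsPrincipal)
    (hmap : ∀ i, Ideal.map (F i) ((Ipill (i + 1)).map (Ideal.Quotient.mk (I (i + 1))))
        = (Ipill i).map (Ideal.Quotient.mk (I i))) :
    ∀ i, Ideal.comap (F i) ((Ipill i).map (Ideal.Quotient.mk (I i)))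
        = (Ipill (i + 1)).map (Ideal.Quotient.mk (I (i + 1))) := by
  have hstep : ∀ j, ((Ipill j).map (Ideal.Quotient.mk (I j))).map (tbar j)
      ≤ (Ipill (j + 1)).map (Ideal.Quotient.mk (I (j + 1))) := by
    intro j
    rw [← hmap j, Ideal.map_map, Ideal.map_le_iff_le_comap]
    intro x hx
    rw [Ideal.mem_comap, RingHom.comp_apply, hF j x]
    exact Ideal.pow_mem_of_mem _ hx _ hp.pos
  have hT : ∀ j, (I1e j).map (Ideal.Quotient.mk (I (j + 1)))
      ≤ (Ipill (j + 1)).map (Ideal.Quotient.mk (I (j + 1))) := by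
    intro j
    induction j with
    | zero => rw [h1]
    | succ j ihj =>
      rw [hI1es j]
      have hcomm : ((I1e j).map (t (j + 1))).map (Ideal.Quotient.mk (I (j + 2)))
          = ((I1e j).map (Ideal.Quotient.mk (I (j + 1)))).map (tbar (j + 1)) := by
        rw [Ideal.map_map, Ideal.map_map]
        congr 1
        exact RingHom.ext fun x => (htbar (j + 1) x).symm
      rw [hcomm]
      exact le_trans (Ideal.map_mono ihj) (hstep (j + 1))
  intro i
  apply le_antisymm
  · intro x hx
    rw [Ideal.mem_comap, ← hmap i] at hx
    obtain ⟨x₀, hx₀⟩ := (hprin (i + 1)).1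
    rw [Ideal.submodule_span_eq] at hx₀
    rw [hx₀, Ideal.map_span, Set.image_singleton, Ideal.map_span, Set.image_singleton] at hx
    obtain ⟨c, hc⟩ := Ideal.mem_span_singleton'.mp hx
    obtain ⟨c', hc'⟩ := hFsurj i c
    have hker : x - c' * Ideal.Quotient.mk (I (i + 1)) x₀ ∈ RingHom.ker (F i) := by
      rw [RingHom.mem_ker, map_sub, map_mul, hc', hc]
      ring
    rw [hkerF i] at hker
    have h2 := hT i hker
    have h3 : c' * Ideal.Quotient.mk (I (i + 1)) x₀
        ∈ (Ipill (i + 1)).map (Ideal.Quotient.mk (I (i + 1))) := by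
      rw [hx₀, Ideal.map_span, Set.image_singleton]
      exact Ideal.mul_mem_left _ _ (Ideal.mem_span_singleton_self _)
    simpa using add_mem h2 h3
  · exact Ideal.map_le_iff_le_comap.mp (hmap i).le

lemma exist_step (p : ℕ) (hp : p.Prime)
    (R : ℕ → Type u) [∀ i, CommRing (R i)]
    (t : ∀ i, R i →+* R (i + 1))
    (I : ∀ i, Ideal (R i))
    (hIsucc : ∀ i, I (i + 1) = (I i).map (t i))
    (tbar : ∀ i, (R i ⧸ I i) →+* (R (i + 1) ⧸ I (i + 1)))
    (htbar : ∀ i (x : R i),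
      tbar i (Ideal.Quotient.mk (I i) x) = Ideal.Quotient.mk (I (i + 1)) (t i x))
    (F : ∀ i, (R (i + 1) ⧸ I (i + 1)) →+* (R i ⧸ I i))
    (hF : ∀ i (x : R (i + 1) ⧸ I (i + 1)), tbar i (F i x) = x ^ p)
    (hFsurj : ∀ i, Function.Surjective (F i))
    (hJac : ∀ i, I i ≤ (⊥ : Ideal (R i)).jacobson)
    (n : ℕ) (a : R (n + 1))
    (h1 : I (n + 1) ≤ Ideal.span {a ^ p})
    (h2 : a ^ p ^ (n + 1) ∈ I (n + 1)) :
    ∃ b : R (n + 2), (I (n + 2) ≤ Ideal.span {b ^ p}) ∧ (b ^ p ^ (n + 2) ∈ I (n + 2)) ∧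
      F (n + 1) (Ideal.Quotient.mk (I (n + 2)) b) = Ideal.Quotient.mk (I (n + 1)) a := by
  obtain ⟨x, hx⟩ := hFsurj (n + 1) (Ideal.Quotient.mk (I (n + 1)) a)
  obtain ⟨g, hg⟩ := Ideal.Quotient.mk_surjective x
  have heq : Ideal.Quotient.mk (I (n + 2)) (t (n + 1) a)
      = Ideal.Quotient.mk (I (n + 2)) (g ^ p) := by
    rw [← htbar (n + 1) a, ← hx, hF (n + 1), ← hg, map_pow]
  have hd : t (n + 1) a - g ^ p ∈ I (n + 2) := Ideal.Quotient.eq.mp heq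
  have hI2le : I (n + 2) ≤ Ideal.span {t (n + 1) a ^ p} := by
    rw [hIsucc (n + 1)]
    calc (I (n + 1)).map (t (n + 1)) ≤ (Ideal.span {a ^ p}).map (t (n + 1)) :=
          Ideal.map_mono h1
      _ = Ideal.span {t (n + 1) a ^ p} := by
          rw [Ideal.map_span, Set.image_singleton, map_pow]
  have htaI : t (n + 1) a ^ p ^ (n + 1) ∈ I (n + 2) := by
    rw [← map_pow, hIsucc (n + 1)]
    exact Ideal.mem_map_of_mem _ h2
  have hjta : t (n + 1) a ∈ (⊥ : Ideal (R (n + 2))).jacobson :=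
    jac_of_pow_mem (hJac (n + 2) htaI)
  obtain ⟨h, hh⟩ := Ideal.mem_span_singleton'.mp (hI2le hd)
  have hA : t (n + 1) a ^ (p - 1) * t (n + 1) a = t (n + 1) a ^ p := by
    rw [← pow_succ, Nat.sub_add_cancel hp.one_le]
  have hrearr : t (n + 1) a * (1 - t (n + 1) a ^ (p - 1) * h) = g ^ p := by
    linear_combination -hh - h * hA
  have hunit : IsUnit (1 - t (n + 1) a ^ (p - 1) * h) :=
    unit_of_jac (Ideal.mul_mem_right _ _
      (Ideal.pow_mem_of_mem _ hjta _ (Nat.sub_pos_of_lt hp.one_lt)))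
  obtain ⟨v, hv⟩ := isUnit_iff_exists_inv.mp hunit
  have hta : t (n + 1) a ∈ Ideal.span {g ^ p} := by
    rw [Ideal.mem_span_singleton']
    exact ⟨v * 1, by linear_combination (-v) * hrearr + t (n + 1) a * hv⟩
  refine ⟨g, ?_, ?_, ?_⟩
  · refine le_trans hI2le (le_trans ?_ ((Ideal.span_singleton_le_iff_mem _).mpr hta))
    exact (Ideal.span_singleton_le_iff_mem _).mpr
      (Ideal.mem_span_singleton.mpr (dvd_pow_self _ hp.ne_zero))
  · have hgp : g ^ p ^ (n + 2) = t (n + 1) a ^ p ^ (n + 1)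
        * (1 - t (n + 1) a ^ (p - 1) * h) ^ p ^ (n + 1) := by
      rw [show p ^ (n + 2) = p * p ^ (n + 1) by ring, pow_mul, ← hrearr, mul_pow]
    rw [hgp]
    exact Ideal.mul_mem_right _ _ htaI
  · rw [hg, hx]

theorem stmt12 (p : ℕ) (hp : p.Prime)
    (R : ℕ → Type u) [∀ i, CommRing (R i)]
    (t : ∀ i, R i →+* R (i + 1))
    (I : ∀ i, Ideal (R i))
    (hpI : (p : R 0) ∈ I 0)
    (hIsucc : ∀ i, I (i + 1) = (I i).map (t i))
    (tbar : ∀ i, (R i ⧸ I i) →+* (R (i + 1) ⧸ I (i + 1)))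
    (htbar : ∀ i (x : R i),
      tbar i (Ideal.Quotient.mk (I i) x) = Ideal.Quotient.mk (I (i + 1)) (t i x))
    (htbarInj : ∀ i, Function.Injective (tbar i))
    (F : ∀ i, (R (i + 1) ⧸ I (i + 1)) →+* (R i ⧸ I i))
    (hF : ∀ i (x : R (i + 1) ⧸ I (i + 1)), tbar i (F i x) = x ^ p)
    (hFsurj : ∀ i, Function.Surjective (F i))
    (hJac : ∀ i, I i ≤ (⊥ : Ideal (R i)).jacobson)
    (hI0prin : (I 0).IsPrincipal)
    (I1e : ∀ i, Ideal (R (i + 1)))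
    (hI1prin : (I1e 0).IsPrincipal)
    (hI1pow : I1e 0 ^ p = I 1)
    (hI1es : ∀ i, I1e (i + 1) = (I1e i).map (t (i + 1)))
    (hkerF : ∀ i, RingHom.ker (F i) = (I1e i).map (Ideal.Quotient.mk (I (i + 1))))
    (htorz : ∀ i, ∀ a ∈ I i, ∀ x ∈ torSet (I i), a * x = 0)
    (hFtor : ∀ i, ∃ G : torSet (I (i + 1)) → torSet (I i), Function.Bijective G ∧
      ∀ x : torSet (I (i + 1)),
        Ideal.Quotient.mk (I i) (G x : R i) = F i (Ideal.Quotient.mk (I (i + 1)) (x : R (i + 1))))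
    :
    (∀ Ipill : ∀ i, Ideal (R i),
      Ipill 0 = I 0 → Ipill 1 = I1e 0 → (∀ i, (Ipill i).IsPrincipal) →
      (((∀ i, Ideal.comap (F i) ((Ipill i).map (Ideal.Quotient.mk (I i)))
            = (Ipill (i + 1)).map (Ideal.Quotient.mk (I (i + 1)))) ↔
        (∀ i, Ideal.map (F i) ((Ipill (i + 1)).map (Ideal.Quotient.mk (I (i + 1))))
            = (Ipill i).map (Ideal.Quotient.mk (I i)))) ∧
      ((∀ i, Ideal.comap (F i) ((Ipill i).map (Ideal.Quotient.mk (I i)))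
            = (Ipill (i + 1)).map (Ideal.Quotient.mk (I (i + 1)))) →
        ∀ i, Ipill (i + 1) ^ p = (Ipill i).map (t i)))) ∧
    (∃ Ipill : ∀ i, Ideal (R i),
      Ipill 0 = I 0 ∧ Ipill 1 = I1e 0 ∧ (∀ i, (Ipill i).IsPrincipal) ∧
      (∀ i, Ideal.comap (F i) ((Ipill i).map (Ideal.Quotient.mk (I i)))
          = (Ipill (i + 1)).map (Ideal.Quotient.mk (I (i + 1)))) ∧
      (∀ Ipill' : ∀ i, Ideal (R i),
        Ipill' 0 = I 0 → Ipill' 1 = I1e 0 → (∀ i, (Ipill' i).IsPrincipal) →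
        (∀ i, Ideal.comap (F i) ((Ipill' i).map (Ideal.Quotient.mk (I i)))
            = (Ipill' (i + 1)).map (Ideal.Quotient.mk (I (i + 1)))) →
        ∀ i, Ipill' i = Ipill i) ∧
      (∃ fbar : ∀ i, R i ⧸ I i,
        (∀ i, (Ipill i).map (Ideal.Quotient.mk (I i)) = Ideal.span {fbar i}) ∧
        ∀ i, F i (fbar (i + 1)) = fbar i)) := by
  constructor
  · intro Ipill h0 h1 hprin
    constructor
    · constructor
      · intro hcom i
        rw [← hcom i, Ideal.map_comap_of_surjective (F i) (hFsurj i)]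
      · intro hmap
        exact map_to_comap p hp R t I tbar htbar F hF hFsurj I1e hI1es hkerF
          Ipill h1 hprin hmap
    · intro hcom i
      exact (key p hp R t I hIsucc tbar htbar F hF hFsurj hJac Ipill h0
        (by rw [h1, hI1pow]) hprin hcom i).1
  · obtain ⟨f1, hf1⟩ := hI1prin.1
    rw [Ideal.submodule_span_eq] at hf1
    have hf1p : f1 ^ p ∈ I 1 := by
      rw [← hI1pow, hf1, Ideal.span_singleton_pow]
      exact Ideal.mem_span_singleton_self _
    have inv1a : I 1 ≤ Ideal.span {f1 ^ p} := by
      rw [← Ideal.span_singleton_pow, ← hf1, hI1pow]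
    have inv1b : f1 ^ p ^ 1 ∈ I 1 := by rw [pow_one]; exact hf1p
    let seq : ∀ n, {a : R (n + 1) //
        I (n + 1) ≤ Ideal.span {a ^ p} ∧ a ^ p ^ (n + 1) ∈ I (n + 1)} :=
      fun n => Nat.rec ⟨f1, inv1a, inv1b⟩
        (fun k ih =>
          ⟨(exist_step p hp R t I hIsucc tbar htbar F hF hFsurj hJac k ih.1
              ih.2.1 ih.2.2).choose,
            (exist_step p hp R t I hIsucc tbar htbar F hF hFsurj hJac k ih.1
              ih.2.1 ih.2.2).choose_spec.1,
            (exist_step p hp R t I hIsucc tbar htbar F hF hFsurj hJac k ih.1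
              ih.2.1 ih.2.2).choose_spec.2.1⟩) n
    have hchain : ∀ n, F (n + 1) (Ideal.Quotient.mk (I (n + 2)) (seq (n + 1)).1)
        = Ideal.Quotient.mk (I (n + 1)) (seq n).1 := fun n =>
      (exist_step p hp R t I hIsucc tbar htbar F hF hFsurj hJac n (seq n).1
        (seq n).2.1 (seq n).2.2).choose_spec.2.2
    have hseq0 : (seq 0).1 = f1 := rfl
    have hF0 : F 0 (Ideal.Quotient.mk (I 1) f1) = 0 := by
      apply htbarInj 0
      rw [hF 0, map_zero, ← map_pow, Ideal.Quotient.eq_zero_iff_mem]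
      exact hf1p
    let E : ∀ i, Ideal (R i) := fun i => Nat.rec (I 0) (fun k _ => Ideal.span {(seq k).1}) i
    have hE1 : E 1 = I1e 0 := hf1.symm
    have hEprin : ∀ i, (E i).IsPrincipal := by
      intro i
      cases i with
      | zero => exact hI0prin
      | succ k => exact ⟨⟨(seq k).1, rfl⟩⟩
    have hEmap : ∀ i, Ideal.map (F i) ((E (i + 1)).map (Ideal.Quotient.mk (I (i + 1))))
        = (E i).map (Ideal.Quotient.mk (I i)) := by
      intro i
      cases i with
      | zero =>
        show Ideal.map (F 0) ((Ideal.span {(seq 0).1}).map (Ideal.Quotient.mk (I 1)))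
            = (I 0).map (Ideal.Quotient.mk (I 0))
        rw [Ideal.map_span, Set.image_singleton, Ideal.map_span, Set.image_singleton,
          Ideal.map_quotient_self, hseq0, hF0]
        exact Ideal.span_singleton_eq_bot.mpr rfl
      | succ k =>
        show Ideal.map (F (k + 1)) ((Ideal.span {(seq (k + 1)).1}).map
              (Ideal.Quotient.mk (I (k + 2))))
            = (Ideal.span {(seq k).1}).map (Ideal.Quotient.mk (I (k + 1)))
        rw [Ideal.map_span, Set.image_singleton, Ideal.map_span, Set.image_singleton,
          Ideal.map_span, Set.image_singleton, hchain k]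
    have hEcom := map_to_comap p hp R t I tbar htbar F hF hFsurj I1e hI1es hkerF
      E hE1 hEprin hEmap
    have hkeyE := key p hp R t I hIsucc tbar htbar F hF hFsurj hJac E rfl
      (by rw [hE1, hI1pow]) hEprin hEcom
    have hIleE : ∀ i, I i ≤ E i := by
      intro i
      cases i with
      | zero => exact le_rfl
      | succ k => exact le_trans (hkeyE k).2.1 (Ideal.pow_le_self hp.ne_zero)
    have huniq : ∀ Ipill' : ∀ i, Ideal (R i),
        Ipill' 0 = I 0 → Ipill' 1 = I1e 0 → (∀ i, (Ipill' i).IsPrincipal) →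
        (∀ i, Ideal.comap (F i) ((Ipill' i).map (Ideal.Quotient.mk (I i)))
            = (Ipill' (i + 1)).map (Ideal.Quotient.mk (I (i + 1)))) →
        ∀ i, Ipill' i = E i := by
      intro P h0' h1' hprin' hcom'
      have hkeyP := key p hp R t I hIsucc tbar htbar F hF hFsurj hJac P h0'
        (by rw [h1', hI1pow]) hprin' hcom'
      have hIleP : ∀ i, I i ≤ P i := by
        intro i
        cases i with
        | zero => exact h0'.ge
        | succ k => exact le_trans (hkeyP k).2.1 (Ideal.pow_le_self hp.ne_zero)
      have main : ∀ i, P i = E i ∧ P (i + 1) = E (i + 1) := by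
        intro i
        induction i with
        | zero => exact ⟨h0', h1'.trans hE1.symm⟩
        | succ k ihk =>
          refine ⟨ihk.2, ?_⟩
          have himg : (P (k + 2)).map (Ideal.Quotient.mk (I (k + 2)))
              = (E (k + 2)).map (Ideal.Quotient.mk (I (k + 2))) := by
            rw [← hcom' (k + 1), ← hEcom (k + 1), ihk.2]
          have cP := Ideal.comap_map_of_surjective (Ideal.Quotient.mk (I (k + 2)))
            Ideal.Quotient.mk_surjective (P (k + 2))
          have cE := Ideal.comap_map_of_surjective (Ideal.Quotient.mk (I (k + 2)))
            Ideal.Quotient.mk_surjective (E (k + 2))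
          rw [← RingHom.ker_eq_comap_bot, Ideal.mk_ker] at cP cE
          calc P (k + 2) = P (k + 2) ⊔ I (k + 2) := (sup_eq_left.mpr (hIleP (k + 2))).symm
            _ = Ideal.comap (Ideal.Quotient.mk (I (k + 2)))
                ((P (k + 2)).map (Ideal.Quotient.mk (I (k + 2)))) := cP.symm
            _ = Ideal.comap (Ideal.Quotient.mk (I (k + 2)))
                ((E (k + 2)).map (Ideal.Quotient.mk (I (k + 2)))) := by rw [himg]
            _ = E (k + 2) ⊔ I (k + 2) := cE
            _ = E (k + 2) := sup_eq_left.mpr (hIleE (k + 2))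
      exact fun i => (main i).1
    refine ⟨E, rfl, hE1, hEprin, hEcom, huniq,
      fun i => Nat.rec 0 (fun k _ => Ideal.Quotient.mk (I (k + 1)) (seq k).1) i, ?_, ?_⟩
    · intro i
      cases i with
      | zero =>
        show (I 0).map (Ideal.Quotient.mk (I 0)) = Ideal.span {(0 : R 0 ⧸ I 0)}
        rw [Ideal.map_quotient_self]
        exact (Ideal.span_singleton_eq_bot.mpr rfl).symm
      | succ k =>
        show (Ideal.span {(seq k).1}).map (Ideal.Quotient.mk (I (k + 1)))
            = Ideal.span {Ideal.Quotient.mk (I (k + 1)) (seq k).1}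
        rw [Ideal.map_span, Set.image_singleton]
    · intro i
      cases i with
      | zero =>
        show F 0 (Ideal.Quotient.mk (I 1) (seq 0).1) = 0
        rw [hseq0, hF0]
      | succ k => exact hchain k

end PaperTower
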